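/- arXiv:2009.00592 — 2 statements merged into one kernel-verified Lean document; each statement's English description precedes it below -/
import Mathlib

section
/- Cauchy-type identity: Σ_ρ g_ρ(x^{(1)};...;x^{(d)}) = ∏_{i₁=1}^{n₁}···∏_{i_d=1}^{n_d} (1 − x^{(1)}_{i₁}···x^{(d)}_{i_d})^{−1}, where the sum runs over all (d−1)-dimensional partitions ρ with diagram contained in [n₂]×···×[n_d]×ℤ₊ (i.e., ρ ∈ P(n₂,...,n_d,∞)), as formal power series. -/
/-!
Record a partition `π` in the box by its corner counts `c(p) = π(p) - max_{q ⋗ p} π(q)`, the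
number of corners of `π` over the cell `p`. Conversely, `π(p) = c(p) + max_{q ⋗ p} π(q)`
rebuilds `π` from an arbitrary `c : box → ℕ` by recursion towards the origin, so `π ↦ c` is a
bijection, and the corner weight of `π` is `∏_p x_p ^ c(p)` with `x_p = x^{(1)}_{i₁} ⋯ x^{(d)}_{i_d}`.
Summing over all `c` gives `∏_p ∑_n x_p ^ n = ∏_p (1 - x_p)⁻¹`. Finally, `sh₁(π) = D(ρ)` just
says `ρ = π(0, ·)`, so grouping the partitions `π` by `ρ` turns this sum into `∑_ρ g_ρ`.
-/
open scoped BigOperators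

noncomputable section

namespace HDG

/- Throughout, the paper's dimension is `d = e + 1`: a `d`-dimensional partition is a
finitely supported, componentwise weakly decreasing function `ℕ × (Fin e → ℕ) → ℕ`
(the first of the `d` coordinates is split off; all coordinates are 0-based). -/

variable {e : ℕ}

/-- The step `i' → i' + e_ℓ`. -/
def step (i : Fin e → ℕ) (ℓ : Fin e) : Fin e → ℕ := Function.update i ℓ (i ℓ + 1)

/-- A `d = e+1`-dimensional partition. -/
def IsPart (π : ℕ × (Fin e → ℕ) → ℕ) : Prop :=
  (Function.support π).Finite ∧
    ∀ i j : ℕ × (Fin e → ℕ), i.1 ≤ j.1 → (∀ ℓ, i.2 ℓ ≤ j.2 ℓ) → π j ≤ π i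

/-- A `(d-1) = e`-dimensional partition. -/
def IsPart' (ρ : (Fin e → ℕ) → ℕ) : Prop :=
  (Function.support ρ).Finite ∧ ∀ i j : Fin e → ℕ, (∀ ℓ, i ℓ ≤ j ℓ) → ρ j ≤ ρ i

/-- The diagram of a `(d-1)`-dimensional partition `ρ`: the points `(i', k)`
with `1 ≤ k ≤ ρ i'`. -/
def Diag (ρ : (Fin e → ℕ) → ℕ) : Set ((Fin e → ℕ) × ℕ) := {p | 1 ≤ p.2 ∧ p.2 ≤ ρ p.1}

/-- `sh₁(π)`: the projection of the diagram of `π` forgetting the first coordinate. -/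
def sh1 (π : ℕ × (Fin e → ℕ) → ℕ) : Set ((Fin e → ℕ) × ℕ) :=
  {p | ∃ i₁ : ℕ, 1 ≤ p.2 ∧ p.2 ≤ π (i₁, p.1)}

/-- `(i₁, i', k)` is a corner of `π`: a point of the diagram such that adding any of
the first `d` standard basis vectors leaves the diagram. -/
def Corner (π : ℕ × (Fin e → ℕ) → ℕ) (i₁ : ℕ) (i' : Fin e → ℕ) (k : ℕ) : Prop :=
  1 ≤ k ∧ k ≤ π (i₁, i') ∧ π (i₁ + 1, i') < k ∧ ∀ ℓ, π (i₁, step i' ℓ) < k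

/-- `c_i(π)`: the number of corners of `π` with first coordinate `i₁`. -/
def cI (π : ℕ × (Fin e → ℕ) → ℕ) (i₁ : ℕ) : ℕ :=
  Nat.card {q : (Fin e → ℕ) × ℕ | Corner π i₁ q.1 q.2}

/-- The diagram of `π` is contained in the box `[m] × [N 0] × ⋯ × [N (e-1)] × [nLast]`. -/
def InBox (m : ℕ) (N : Fin e → ℕ) (nLast : ℕ) (π : ℕ × (Fin e → ℕ) → ℕ) : Prop :=
  (∀ p, π p ≠ 0 → p.1 < m ∧ ∀ ℓ, p.2 ℓ < N ℓ) ∧ ∀ p, π p ≤ nLast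

/-- The diagram of `π` is contained in `[m] × [N 0] × ⋯ × [N (e-1)] × ℤ₊`
(no bound on the values). -/
def InBox' (m : ℕ) (N : Fin e → ℕ) (π : ℕ × (Fin e → ℕ) → ℕ) : Prop :=
  ∀ p, π p ≠ 0 → p.1 < m ∧ ∀ ℓ, p.2 ℓ < N ℓ

end HDG

open HDG
/-- The full multivariable `d`-dimensional Grothendieck polynomial with unbounded
values (`n_{d+1} = ∞`): `x^{(1)}_{i₁}` is `X (Sum.inl i₁)` and `x^{(j)}_{i_j}` is
`X (Sum.inr (j, i_j))` for `2 ≤ j ≤ d`. -/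
noncomputable def gFull' (e : ℕ) (m : ℕ) (N : Fin e → ℕ)
    (ρ : (Fin e → ℕ) → ℕ) : MvPolynomial (ℕ ⊕ (Fin e × ℕ)) ℚ :=
  ∑ᶠ π ∈ {π : ℕ × (Fin e → ℕ) → ℕ | IsPart π ∧ InBox' m N π ∧ sh1 π = Diag ρ},
    ∏ᶠ c ∈ {c : ℕ × (Fin e → ℕ) × ℕ | Corner π c.1 c.2.1 c.2.2},
      MvPolynomial.X (Sum.inl c.1) * ∏ ℓ : Fin e, MvPolynomial.X (Sum.inr (ℓ, c.2.1 ℓ))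

/-- The product topology on formal power series (coefficientwise convergence). -/
instance mvPowerSeriesTopology (σ : Type*) : TopologicalSpace (MvPowerSeries σ ℚ) :=
  inferInstanceAs (TopologicalSpace ((σ →₀ ℕ) → ℚ))

instance (σ : Type*) : T3Space (MvPowerSeries σ ℚ) :=
  inferInstanceAs (T3Space ((σ →₀ ℕ) → ℚ))

instance (σ : Type*) : ContinuousAdd (MvPowerSeries σ ℚ) :=
  inferInstanceAs (ContinuousAdd ((σ →₀ ℕ) → ℚ))

lemma hasSum_finsum_mem {α β : Type*} [AddCommMonoid α] [TopologicalSpace α] {s : Set β}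
    (hs : s.Finite) (f : β → α) : HasSum (fun x : s => f x) (∑ᶠ x ∈ s, f x) := by
  have := hs.fintype
  rw [← finsum_set_coe_eq_finsum_mem, finsum_eq_sum_of_fintype]
  exact hasSum_fintype _

namespace MvPowerSeries

open WithPiTopology

variable {σ : Type*}

lemma coeff_prod_pow_eq_zero_of_degree_lt {ι R : Type*} [Fintype ι] [CommSemiring R]
    {x : ι → MvPowerSeries σ R} (hx : ∀ i, constantCoeff (x i) = 0) (f : ι → ℕ)
    {d : σ →₀ ℕ} (hd : d.degree < ∑ i, f i) : coeff d (∏ i, x i ^ f i) = 0 := by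
  refine coeff_of_lt_order (lt_of_lt_of_le ?_ (le_order_prod _ _))
  calc (d.degree : ℕ∞) < ∑ i, f i := by exact_mod_cast hd
    _ ≤ ∑ i, (x i ^ f i).order := by
      push_cast
      exact Finset.sum_le_sum fun i _ => le_order_pow_of_constantCoeff_eq_zero _ (hx i)

lemma summable_prod_pow {ι R : Type*} [Fintype ι] [CommSemiring R] [TopologicalSpace R]
    {x : ι → MvPowerSeries σ R} (hx : ∀ i, constantCoeff (x i) = 0) :
    Summable fun f : ι → ℕ => ∏ i, x i ^ f i := by
  refine summable_iff_summable_coeff.mpr fun d => summable_of_hasFiniteSupport ?_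
  refine (Set.Finite.pi fun _ => Set.finite_Iic d.degree).subset fun f hf => ?_
  simp only [Set.mem_pi, Set.mem_univ, Set.mem_Iic, forall_const]
  intro i
  by_contra! h
  exact hf (coeff_prod_pow_eq_zero_of_degree_lt hx f
    (h.trans_le (Finset.single_le_sum (fun j _ => Nat.zero_le (f j)) (Finset.mem_univ i))))

variable {K : Type*} [Field K] [TopologicalSpace K] [IsTopologicalRing K]

lemma hasSum_pow_inv_one_sub [T2Space K] {x : MvPowerSeries σ K} (hx : constantCoeff x = 0) :
    HasSum (x ^ ·) (1 - x)⁻¹ := by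
  have h := (summable_pow_of_constantCoeff_eq_zero hx).hasSum
  rwa [MvPowerSeries.eq_inv_iff_mul_eq_one (by simp [hx]) |>.mpr
    (tsum_pow_mul_one_sub_of_constantCoeff_eq_zero hx)] at h

theorem hasSum_prod_pow [T3Space K] {ι : Type*} [Fintype ι] (x : ι → MvPowerSeries σ K)
    (hx : ∀ i, constantCoeff (x i) = 0) :
    HasSum (fun f : ι → ℕ => ∏ i, x i ^ f i) (∏ i, (1 - x i)⁻¹) := by
  refine Fintype.induction_empty_option (P := fun ι _ => ∀ x : ι → MvPowerSeries σ K,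
    (∀ i, constantCoeff (x i) = 0) →
      HasSum (fun f : ι → ℕ => ∏ i, x i ^ f i) (∏ i, (1 - x i)⁻¹)) ?_ ?_ ?_ ι x hx
  · intro α β _ e ih x hx
    let _ : Fintype α := Fintype.ofEquiv β e.symm
    have h := (Equiv.arrowCongr e.symm (Equiv.refl ℕ)).hasSum_iff.mpr
      (ih (x ∘ e) fun a => hx (e a))
    convert h using 1
    · ext1 f
      exact (Fintype.prod_equiv e _ _ fun a => rfl).symm
    · exact (Fintype.prod_equiv e _ _ fun a => rfl).symm
  · intro x _
    simp
  · intro ι _ ih x hx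
    have hsplit : (fun f : Option ι → ℕ => ∏ o, x o ^ f o) =
        (fun g : ℕ × (ι → ℕ) => x none ^ g.1 * ∏ i, x (some i) ^ g.2 i) ∘
          Equiv.piOptionEquivProd := by
      ext1 f
      exact Fintype.prod_option _
    have hsum := summable_prod_pow hx
    rw [hsplit, Equiv.summable_iff] at hsum
    rw [Fintype.prod_option, hsplit, Equiv.hasSum_iff]
    exact ((hasSum_pow_inv_one_sub (hx none)).mul
      (ih (fun i => x (some i)) fun i => hx (some i)) hsum :)

end MvPowerSeries

namespace HDG

variable {e : ℕ}

section Antitone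

lemma le_step (i : Fin e → ℕ) (ℓ : Fin e) : i ≤ step i ℓ := by
  simp [step]

def upperMax (π : ℕ × (Fin e → ℕ) → ℕ) (p : ℕ × (Fin e → ℕ)) : ℕ :=
  max (π (p.1 + 1, p.2)) (Finset.univ.sup fun ℓ => π (p.1, step p.2 ℓ))

lemma antitone_iff_upperMax_le {π : ℕ × (Fin e → ℕ) → ℕ} :
    Antitone π ↔ ∀ p, upperMax π p ≤ π p := by
  refine ⟨fun hπ p => max_le ?_ (Finset.sup_le fun ℓ _ => ?_), fun h => ?_⟩
  · exact hπ (Prod.mk_le_mk.mpr ⟨Nat.le_succ _, le_rfl⟩)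
  · exact hπ (Prod.mk_le_mk.mpr ⟨le_rfl, le_step _ _⟩)
  classical
  refine (antitone_iff_forall_covBy π).mpr fun p q hpq => ?_
  rcases Prod.covBy_iff.mp hpq with ⟨h1, h2⟩ | ⟨h2, h1⟩
  · obtain ⟨q₁, q₂⟩ := q
    obtain rfl : p.1 + 1 = q₁ := Nat.covBy_iff_add_one_eq.mp h1
    obtain rfl : p.2 = q₂ := h2
    exact (le_max_left _ _).trans (h p)
  · obtain ⟨ℓ, x, hx, hq⟩ := Pi.covBy_iff_exists_right_eq.mp h2
    obtain ⟨q₁, q₂⟩ := q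
    obtain rfl : p.1 = q₁ := h1
    obtain rfl : p.2 ℓ + 1 = x := Nat.covBy_iff_add_one_eq.mp hx
    obtain rfl : step p.2 ℓ = q₂ := hq.symm
    exact (Finset.le_sup (f := fun ℓ => π (p.1, step p.2 ℓ)) (Finset.mem_univ ℓ)).trans
      ((le_max_right _ _).trans (h p))

lemma isPart_iff {π : ℕ × (Fin e → ℕ) → ℕ} :
    IsPart π ↔ (Function.support π).Finite ∧ Antitone π :=
  and_congr_right' ⟨fun h _ _ hij => h _ _ hij.1 hij.2, fun h _ _ h₁ h₂ => h ⟨h₁, h₂⟩⟩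

end Antitone

section Box

variable (m : ℕ) (N : Fin e → ℕ)

def box : Set (ℕ × (Fin e → ℕ)) := {p | p.1 < m ∧ ∀ ℓ, p.2 ℓ < N ℓ}

abbrev BoxCell := Fin m × ((ℓ : Fin e) → Fin (N ℓ))

variable {m N}

def BoxCell.pt (b : BoxCell m N) : ℕ × (Fin e → ℕ) := (b.1, fun ℓ => b.2 ℓ)

def toCell {p : ℕ × (Fin e → ℕ)} (h : p ∈ box m N) : BoxCell m N :=
  (⟨p.1, h.1⟩, fun ℓ => ⟨p.2 ℓ, h.2 ℓ⟩)

lemma pt_toCell {p : ℕ × (Fin e → ℕ)} (h : p ∈ box m N) : (toCell h).pt = p := rfl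

lemma BoxCell.pt_mem (b : BoxCell m N) : b.pt ∈ box m N := ⟨b.1.2, fun ℓ => (b.2 ℓ).2⟩

lemma BoxCell.pt_injective : Function.Injective (BoxCell.pt (m := m) (N := N)) := by
  intro b b' h
  simp only [BoxCell.pt, Prod.mk.injEq, funext_iff] at h
  exact Prod.ext (Fin.ext h.1) (funext fun ℓ => Fin.ext (h.2 ℓ))

lemma box_eq_range : box m N = Set.range (BoxCell.pt (m := m) (N := N)) :=
  Set.ext fun p => ⟨fun h => ⟨toCell h, rfl⟩, by rintro ⟨b, rfl⟩; exact b.pt_mem⟩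

lemma mem_box_of_le {p q : ℕ × (Fin e → ℕ)} (hq : q ∈ box m N) (h : p ≤ q) : p ∈ box m N :=
  ⟨h.1.trans_lt hq.1, fun ℓ => (h.2 ℓ).trans_lt (hq.2 ℓ)⟩

variable (m N) in
def fuel (p : ℕ × (Fin e → ℕ)) : ℕ := (m - p.1) + ∑ ℓ, (N ℓ - p.2 ℓ)

lemma fuel_succ_lt {p : ℕ × (Fin e → ℕ)} (h : p ∈ box m N) :
    fuel m N (p.1 + 1, p.2) < fuel m N p := by
  have := h.1
  simp only [fuel]
  omega

lemma fuel_step_lt {p : ℕ × (Fin e → ℕ)} (h : p ∈ box m N) (ℓ : Fin e) :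
    fuel m N (p.1, step p.2 ℓ) < fuel m N p := by
  refine Nat.add_lt_add_left (Finset.sum_lt_sum (fun ℓ' _ => ?_) ⟨ℓ, Finset.mem_univ _, ?_⟩) _
  · exact Nat.sub_le_sub_left (le_step p.2 ℓ ℓ') _
  · simp only [step, Function.update_self]
    have := h.2 ℓ
    omega

end Box

section CornerCoordinates

variable {m : ℕ} {N : Fin e → ℕ}

/-- The number of corners of `π` over the cell `p`. -/
def cornerCount (π : ℕ × (Fin e → ℕ) → ℕ) (p : ℕ × (Fin e → ℕ)) : ℕ := π p - upperMax π p

open Classical in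
/-- The partition in the box whose corner counts are `c`. -/
noncomputable def ofCorners (c : BoxCell m N → ℕ) (p : ℕ × (Fin e → ℕ)) : ℕ :=
  if h : p ∈ box m N then
    c (toCell h) + max (ofCorners c (p.1 + 1, p.2))
      (Finset.univ.sup fun ℓ => ofCorners c (p.1, step p.2 ℓ))
  else 0
termination_by fuel m N p
decreasing_by
  · exact fuel_succ_lt h
  · exact fuel_step_lt h ℓ

lemma ofCorners_of_mem (c : BoxCell m N → ℕ) {p : ℕ × (Fin e → ℕ)} (h : p ∈ box m N) :
    ofCorners c p = c (toCell h) + upperMax (ofCorners c) p := by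
  rw [ofCorners, dif_pos h, upperMax]

lemma ofCorners_of_notMem (c : BoxCell m N → ℕ) {p : ℕ × (Fin e → ℕ)} (h : p ∉ box m N) :
    ofCorners c p = 0 := by
  rw [ofCorners, dif_neg h]

lemma cornerCount_ofCorners (c : BoxCell m N → ℕ) (b : BoxCell m N) :
    cornerCount (ofCorners c) b.pt = c b := by
  rw [cornerCount, ofCorners_of_mem c b.pt_mem, Nat.add_sub_cancel]
  rfl

lemma antitone_ofCorners (c : BoxCell m N → ℕ) : Antitone (ofCorners c) := by
  refine antitone_iff_upperMax_le.mpr fun p => ?_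
  by_cases h : p ∈ box m N
  · rw [ofCorners_of_mem c h]
    exact Nat.le_add_left _ _
  · have hout : ∀ q, p ≤ q → ofCorners c q = 0 :=
      fun q hpq => ofCorners_of_notMem c fun hq => h (mem_box_of_le hq hpq)
    rw [upperMax, hout _ (Prod.mk_le_mk.mpr ⟨Nat.le_succ _, le_rfl⟩)]
    simp [hout _ (Prod.mk_le_mk.mpr ⟨le_rfl, le_step _ _⟩)]

lemma isPart_ofCorners (c : BoxCell m N → ℕ) : IsPart (ofCorners c) := by
  refine isPart_iff.mpr ⟨?_, antitone_ofCorners c⟩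
  refine (box_eq_range ▸ Set.finite_range _ : (box m N).Finite).subset fun p hp => ?_
  by_contra h
  exact hp (ofCorners_of_notMem c h)

lemma inBox'_ofCorners (c : BoxCell m N → ℕ) : InBox' m N (ofCorners c) := fun _ hp =>
  of_not_not fun h => hp (ofCorners_of_notMem c h)

lemma ofCorners_cornerCount {π : ℕ × (Fin e → ℕ) → ℕ} (hπ : Antitone π) (hbox : InBox' m N π) :
    ofCorners (fun b : BoxCell m N => cornerCount π b.pt) = π := by
  funext p
  induction p using ofCorners.induct with
  | case1 p h ih₁ ih₂ =>
    have hmax : upperMax (ofCorners fun b : BoxCell m N => cornerCount π b.pt) p = upperMax π p := by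
      simp only [upperMax, ih₁, ih₂]
    rw [ofCorners_of_mem _ h, hmax, pt_toCell, cornerCount,
      Nat.sub_add_cancel (antitone_iff_upperMax_le.mp hπ p)]
  | case2 p h =>
    rw [ofCorners_of_notMem _ h]
    exact (of_not_not fun hp => h (hbox p hp)).symm

variable (m N) in
abbrev BoxPart := {π : ℕ × (Fin e → ℕ) → ℕ // IsPart π ∧ InBox' m N π}

variable (m N) in
noncomputable def cornerEquiv : BoxPart m N ≃ (BoxCell m N → ℕ) where
  toFun π b := cornerCount π.1 b.pt
  invFun c := ⟨ofCorners c, isPart_ofCorners c, inBox'_ofCorners c⟩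
  left_inv π := Subtype.ext (ofCorners_cornerCount (isPart_iff.mp π.2.1).2 π.2.2)
  right_inv c := funext (cornerCount_ofCorners c)

end CornerCoordinates

section Weight

variable {m : ℕ} {N : Fin e → ℕ}

/-- `x^{(1)}_{i₁} x^{(2)}_{i₂} ⋯ x^{(d)}_{i_d}` for the cell `p = (i₁, i')`. -/
noncomputable def cellMonomial (p : ℕ × (Fin e → ℕ)) : MvPolynomial (ℕ ⊕ (Fin e × ℕ)) ℚ :=
  MvPolynomial.X (Sum.inl p.1) * ∏ ℓ : Fin e, MvPolynomial.X (Sum.inr (ℓ, p.2 ℓ))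

noncomputable def cornerWeight (π : ℕ × (Fin e → ℕ) → ℕ) : MvPolynomial (ℕ ⊕ (Fin e × ℕ)) ℚ :=
  ∏ᶠ c ∈ {c : ℕ × (Fin e → ℕ) × ℕ | Corner π c.1 c.2.1 c.2.2}, cellMonomial (c.1, c.2.1)

lemma corner_iff {π : ℕ × (Fin e → ℕ) → ℕ} {i₁ : ℕ} {i' : Fin e → ℕ} {k : ℕ} :
    Corner π i₁ i' k ↔ k ∈ Finset.Ioc (upperMax π (i₁, i')) (π (i₁, i')) := by
  rw [Finset.mem_Ioc, upperMax, max_lt_iff]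
  constructor
  · rintro ⟨hk₁, hk, h₁, h₂⟩
    exact ⟨⟨h₁, (Finset.sup_lt_iff hk₁).mpr fun ℓ _ => h₂ ℓ⟩, hk⟩
  · rintro ⟨⟨h₁, h₂⟩, hk⟩
    exact ⟨Nat.zero_lt_of_lt h₁, hk, h₁,
      fun ℓ => (Finset.sup_lt_iff (Nat.zero_lt_of_lt h₁)).mp h₂ ℓ (Finset.mem_univ ℓ)⟩

lemma cornerWeight_eq {π : ℕ × (Fin e → ℕ) → ℕ} (hbox : InBox' m N π) :
    cornerWeight π = ∏ b : BoxCell m N, cellMonomial b.pt ^ cornerCount π b.pt := by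
  let T : Finset (Σ _ : BoxCell m N, ℕ) :=
    Finset.univ.sigma fun b => Finset.Ioc (upperMax π b.pt) (π b.pt)
  let f : (Σ _ : BoxCell m N, ℕ) → ℕ × (Fin e → ℕ) × ℕ := fun x => (x.1.pt.1, x.1.pt.2, x.2)
  have hcorners : {c : ℕ × (Fin e → ℕ) × ℕ | Corner π c.1 c.2.1 c.2.2} = f '' T := by
    ext ⟨i₁, i', k⟩
    constructor
    · intro (hc : Corner π i₁ i' k)
      have hmem : (i₁, i') ∈ box m N := hbox _ (by have := hc.1; have := hc.2.1; omega)
      exact ⟨⟨toCell hmem, k⟩, Finset.mem_sigma.mpr ⟨Finset.mem_univ _, corner_iff.mp hc⟩, rfl⟩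
    · rintro ⟨⟨b, k⟩, hx, hfx⟩
      simp only [f, Prod.mk.injEq] at hfx
      obtain ⟨rfl, rfl, rfl⟩ := hfx
      exact corner_iff.mpr (Finset.mem_sigma.mp hx).2
  have hinj : Set.InjOn f T := by
    rintro ⟨b, k⟩ - ⟨b', k'⟩ - h
    simp only [f, Prod.mk.injEq] at h
    obtain rfl : b = b' := BoxCell.pt_injective (Prod.ext h.1 h.2.1)
    obtain rfl : k = k' := h.2.2
    rfl
  rw [cornerWeight, hcorners, finprod_mem_image hinj, finprod_mem_coe_finset, Finset.prod_sigma]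
  refine Finset.prod_congr rfl fun b _ => ?_
  change ∏ _k ∈ _, cellMonomial b.pt = _
  rw [Finset.prod_const, Nat.card_Ioc, cornerCount]

lemma coe_cellMonomial (p : ℕ × (Fin e → ℕ)) :
    (cellMonomial p : MvPowerSeries (ℕ ⊕ (Fin e × ℕ)) ℚ) =
      MvPowerSeries.X (Sum.inl p.1) * ∏ ℓ : Fin e, MvPowerSeries.X (Sum.inr (ℓ, p.2 ℓ)) := by
  rw [cellMonomial, MvPolynomial.coe_mul, MvPolynomial.coe_X]
  exact congrArg _ ((map_prod MvPolynomial.coeToMvPowerSeries.ringHom _ _).trans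
    (Finset.prod_congr rfl fun ℓ _ => MvPolynomial.coe_X _))

lemma constantCoeff_cellMonomial (p : ℕ × (Fin e → ℕ)) :
    MvPowerSeries.constantCoeff (cellMonomial p : MvPowerSeries (ℕ ⊕ (Fin e × ℕ)) ℚ) = 0 := by
  rw [coe_cellMonomial, map_mul, MvPowerSeries.constantCoeff_X, zero_mul]

lemma coe_cornerWeight {π : ℕ × (Fin e → ℕ) → ℕ} (hbox : InBox' m N π) :
    (cornerWeight π : MvPowerSeries (ℕ ⊕ (Fin e × ℕ)) ℚ) =
      ∏ b : BoxCell m N, (cellMonomial b.pt : MvPowerSeries (ℕ ⊕ (Fin e × ℕ)) ℚ) ^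
        cornerCount π b.pt := by
  rw [cornerWeight_eq hbox, ← MvPolynomial.coeToMvPowerSeries.ringHom_apply, map_prod]
  simp only [map_pow, MvPolynomial.coeToMvPowerSeries.ringHom_apply]

end Weight

section Assembly

variable (m : ℕ) (N : Fin e → ℕ)

lemma hasSum_cornerWeight :
    HasSum (fun π : BoxPart m N => (cornerWeight π.1 : MvPowerSeries (ℕ ⊕ (Fin e × ℕ)) ℚ))
      (∏ b : BoxCell m N, (1 - (cellMonomial b.pt : MvPowerSeries (ℕ ⊕ (Fin e × ℕ)) ℚ))⁻¹) := by
  have hweight :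
      (fun π : BoxPart m N => (cornerWeight π.1 : MvPowerSeries (ℕ ⊕ (Fin e × ℕ)) ℚ)) =
        (fun c : BoxCell m N → ℕ =>
          ∏ b, (cellMonomial b.pt : MvPowerSeries (ℕ ⊕ (Fin e × ℕ)) ℚ) ^ c b) ∘
            cornerEquiv m N :=
    funext fun π => coe_cornerWeight π.2.2
  rw [hweight, Equiv.hasSum_iff]
  exact MvPowerSeries.hasSum_prod_pow _ fun b => constantCoeff_cellMonomial b.pt

lemma prod_inv_one_sub_eq (m : ℕ) (N : Fin e → ℕ) :
    ∏ i₁ ∈ Finset.range m, ∏ v : (∀ ℓ : Fin e, Fin (N ℓ)),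
        (1 - MvPowerSeries.X (Sum.inl i₁) *
          ∏ ℓ : Fin e, MvPowerSeries.X (Sum.inr (ℓ, (v ℓ : ℕ))))⁻¹
      = ∏ b : BoxCell m N, (1 - (cellMonomial b.pt : MvPowerSeries (ℕ ⊕ (Fin e × ℕ)) ℚ))⁻¹ := by
  rw [Fintype.prod_prod_type, Finset.prod_range]
  simp only [coe_cellMonomial, BoxCell.pt]

end Assembly

section Fibres

variable {m : ℕ} {N : Fin e → ℕ}

lemma diag_injective : Function.Injective (Diag (e := e)) := by
  intro ρ ρ' h
  funext i'
  have hmem : ∀ k, (1 ≤ k ∧ k ≤ ρ i') ↔ (1 ≤ k ∧ k ≤ ρ' i') := fun k => Set.ext_iff.mp h (i', k)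
  have h₁ := hmem (ρ i')
  have h₂ := hmem (ρ' i')
  omega

lemma sh1_eq_diag_iff {π : ℕ × (Fin e → ℕ) → ℕ} (hπ : Antitone π) {ρ : (Fin e → ℕ) → ℕ} :
    sh1 π = Diag ρ ↔ (fun i' => π (0, i')) = ρ := by
  suffices sh1 π = Diag fun i' => π (0, i') by rw [this, diag_injective.eq_iff]
  ext ⟨i', k⟩
  exact ⟨fun ⟨i₁, hk₁, hk⟩ => ⟨hk₁, hk.trans (hπ (Prod.mk_le_mk.mpr ⟨Nat.zero_le i₁, le_rfl⟩))⟩,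
    fun ⟨hk₁, hk⟩ => ⟨0, hk₁, hk⟩⟩

variable (m N) in
def fibre (ρ : (Fin e → ℕ) → ℕ) : Set (ℕ × (Fin e → ℕ) → ℕ) :=
  {π | IsPart π ∧ InBox' m N π ∧ sh1 π = Diag ρ}

lemma finite_fibre {ρ : (Fin e → ℕ) → ℕ} (hρ : IsPart' ρ) : (fibre m N ρ).Finite := by
  let restrict : (ℕ × (Fin e → ℕ) → ℕ) → BoxCell m N → ℕ := fun π b => π b.pt
  refine Set.Finite.of_finite_image (f := restrict)
    ((Set.Finite.pi fun _ : BoxCell m N => Set.finite_Iic (ρ 0)).subset ?_) ?_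
  · rintro _ ⟨π, ⟨hπ, -, hsh⟩, rfl⟩
    have hanti := (isPart_iff.mp hπ).2
    refine Set.mem_univ_pi.mpr fun b => ?_
    calc π b.pt ≤ π (0, b.pt.2) := hanti (Prod.mk_le_mk.mpr ⟨Nat.zero_le _, le_rfl⟩)
      _ = ρ b.pt.2 := congrFun ((sh1_eq_diag_iff hanti).mp hsh) _
      _ ≤ ρ 0 := hρ.2 _ _ fun _ => Nat.zero_le _
  · intro π hπ π' hπ' h
    funext p
    by_cases hp : p ∈ box m N
    · exact congrFun h (toCell hp)
    · rw [of_not_not fun h0 => hp (hπ.2.1 p h0), of_not_not fun h0 => hp (hπ'.2.1 p h0)]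

lemma hasSum_gFull' {ρ : (Fin e → ℕ) → ℕ} (hρ : IsPart' ρ) :
    HasSum (fun π : fibre m N ρ => (cornerWeight π.1 : MvPowerSeries (ℕ ⊕ (Fin e × ℕ)) ℚ))
      (gFull' e m N ρ) := by
  have hcoe : (gFull' e m N ρ : MvPowerSeries (ℕ ⊕ (Fin e × ℕ)) ℚ) =
      ∑ᶠ π ∈ fibre m N ρ, (cornerWeight π : MvPowerSeries (ℕ ⊕ (Fin e × ℕ)) ℚ) :=
    MvPolynomial.coeToMvPowerSeries.ringHom.toAddMonoidHom.map_finsum_mem _ (finite_fibre hρ)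
  rw [hcoe]
  exact hasSum_finsum_mem (finite_fibre hρ) _

variable (m N) in
abbrev BoxPart' := {ρ : (Fin e → ℕ) → ℕ // IsPart' ρ ∧ ∀ i', ρ i' ≠ 0 → ∀ ℓ, i' ℓ < N ℓ}

/-- The `ρ` with `sh₁(π) = D(ρ)`: the layer `i₁ = 0` of `π`. -/
def BoxPart.bottom (π : BoxPart m N) : BoxPart' N :=
  ⟨fun i' => π.1 (0, i'),
    ⟨π.2.1.1.preimage (Prod.mk_right_injective 0).injOn, fun _ _ h => π.2.1.2 _ _ le_rfl h⟩,
    fun i' h => (π.2.2 (0, i') h).2⟩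

variable (m N) in
noncomputable def sigmaFibreEquiv : BoxPart m N ≃ Σ ρ : BoxPart' N, fibre m N ρ.1 where
  toFun π := ⟨π.bottom, π.1, π.2.1, π.2.2, (sh1_eq_diag_iff (isPart_iff.mp π.2.1).2).mpr rfl⟩
  invFun x := ⟨x.2.1, x.2.2.1, x.2.2.2.1⟩
  left_inv _ := rfl
  right_inv := by
    rintro ⟨ρ, π, hπ, hbox, hsh⟩
    obtain rfl : BoxPart.bottom ⟨π, hπ, hbox⟩ = ρ :=
      Subtype.ext ((sh1_eq_diag_iff (isPart_iff.mp hπ).2).mp hsh)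
    rfl

end Fibres

end HDG

/-- Cauchy-type identity: the sum of `g_ρ` over all `(d-1)`-dimensional partitions
`ρ ∈ P(n₂, …, n_d, ∞)` equals `∏ (1 - x^{(1)}_{i₁} ⋯ x^{(d)}_{i_d})⁻¹` over the box. -/
theorem cauchy_identity {e : ℕ} (m : ℕ) (N : Fin e → ℕ) :
    ∑' ρ : {ρ : (Fin e → ℕ) → ℕ // IsPart' ρ ∧ ∀ i', ρ i' ≠ 0 → ∀ ℓ, i' ℓ < N ℓ},
        ((gFull' e m N ρ.1 : MvPolynomial (ℕ ⊕ (Fin e × ℕ)) ℚ) :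
          MvPowerSeries (ℕ ⊕ (Fin e × ℕ)) ℚ)
      = ∏ i₁ ∈ Finset.range m, ∏ v : (∀ ℓ : Fin e, Fin (N ℓ)),
          (1 - MvPowerSeries.X (Sum.inl i₁) *
            ∏ ℓ : Fin e, MvPowerSeries.X (Sum.inr (ℓ, (v ℓ : ℕ))))⁻¹ := by
  rw [prod_inv_one_sub_eq m N]
  have hsigma := (sigmaFibreEquiv m N).symm.hasSum_iff.mpr (hasSum_cornerWeight m N)
  exact (hsigma.sigma fun ρ => hasSum_gFull' ρ.2.1).tsum_eq
end
end

section
/- Last passage percolation distribution: let W = (w_i) for i ∈ [n₁]×···×[n_d] be i.i.d. geometric random variables with P(w = k) = (1−q)q^k, and let G(i) be the last passage time from (1,...,1) to i (maximum over directed lattice paths of the sum of weights). Then for any (d−1)-dimensional partition ρ ∈ P(n₂,...,n_d,∞), P(G(n₁, n−i) = ρ_i for all i ∈ [n₂]×···×[n_d]) = (1−q)^{n₁···n_d} · g_ρ(q,...,q) with n₁ q's, where n = (n₂+1,...,n_d+1). -/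
open scoped BigOperators

noncomputable section

open HDG
namespace HDG

variable {e : ℕ}

/-- One directed step in `ℤ₊^d` (`d = e + 1`): add a standard basis vector. -/
def DStep (p q : ℕ × (Fin e → ℕ)) : Prop :=
  q = (p.1 + 1, p.2) ∨ ∃ ℓ, q = (p.1, step p.2 ℓ)

/-- The last passage time `G(1 → i)` from the origin `(1, …, 1)` (which is
`(0, fun _ => 0)` in 0-based coordinates) to `i`: the maximum over directed lattice
paths from the origin to `i` of the sum of the weights along the path. -/
noncomputable def lptTo (W : ℕ × (Fin e → ℕ) → ℕ) (i : ℕ × (Fin e → ℕ)) : ℕ :=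
  sSup {s | ∃ n, ∃ p : ℕ → ℕ × (Fin e → ℕ), p 0 = (0, fun _ => 0) ∧ p n = i ∧
    (∀ t < n, DStep (p t) (p (t + 1))) ∧ s = ∑ t ∈ Finset.range (n + 1), W (p t)}

end HDG

/-- The one-alphabet `d`-dimensional Grothendieck polynomial `g_ρ(x₁,…,x_m)` with
unbounded values (`n_{d+1} = ∞`), over `ℝ`; our variables `X 0, …, X (m-1)` are the
paper's `x₁, …, x_m` (variables `X i`, `i ≥ m`, do not occur). -/
noncomputable def gR (e : ℕ) (m : ℕ) (N : Fin e → ℕ)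
    (ρ : (Fin e → ℕ) → ℕ) : MvPolynomial ℕ ℝ :=
  ∑ᶠ π ∈ {π : ℕ × (Fin e → ℕ) → ℕ | IsPart π ∧ InBox' m N π ∧ sh1 π = Diag ρ},
    ∏ᶠ i : ℕ, MvPolynomial.X i ^ cI π i


namespace LPPAux

open HDG Classical
open scoped Classical

variable {e : ℕ}

abbrev Pt (e : ℕ) := ℕ × (Fin e → ℕ)

def c (p : Pt e) : Option (Fin e) → ℕ
  | none => p.1
  | some ℓ => p.2 ℓ

def dec (p : Pt e) : Option (Fin e) → Pt e
  | none => (p.1 - 1, p.2)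
  | some ℓ => (p.1, Function.update p.2 ℓ (p.2 ℓ - 1))

def inc (p : Pt e) : Option (Fin e) → Pt e
  | none => (p.1 + 1, p.2)
  | some ℓ => (p.1, step p.2 ℓ)

def sz (p : Pt e) : ℕ := p.1 + ∑ ℓ, p.2 ℓ

lemma ext_c {p q : Pt e} (h : ∀ ℓ, c p ℓ = c q ℓ) : p = q := by
  obtain ⟨p1, p2⟩ := p; obtain ⟨q1, q2⟩ := q
  have h1 := h none
  simp only [c] at h1
  have h2 : p2 = q2 := funext fun ℓ => h (some ℓ)
  simp [h1, h2]

lemma c_le_c_inc (p : Pt e) (ℓ ℓ' : Option (Fin e)) : c p ℓ' ≤ c (inc p ℓ) ℓ' := by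
  cases ℓ with
  | none => cases ℓ' <;> simp [c, inc]
  | some l =>
    cases ℓ' with
    | none => simp [c, inc]
    | some l' =>
      simp only [c, inc, step]
      rcases eq_or_ne l' l with rfl | h
      · simp
      · rw [Function.update_of_ne h]

lemma c_inc_self (p : Pt e) (ℓ : Option (Fin e)) : c (inc p ℓ) ℓ = c p ℓ + 1 := by
  cases ℓ <;> simp [c, inc, step]

lemma dec_inc (p : Pt e) (ℓ : Option (Fin e)) : dec (inc p ℓ) ℓ = p := by
  cases ℓ with
  | none => simp [dec, inc]
  | some l =>
    simp only [dec, inc, step, Function.update_self, Function.update_idem,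
      Nat.add_sub_cancel, Function.update_eq_self]

lemma inc_dec {p : Pt e} {ℓ : Option (Fin e)} (h : 0 < c p ℓ) : inc (dec p ℓ) ℓ = p := by
  cases ℓ with
  | none =>
    simp only [c] at h
    simp only [inc, dec]
    rw [Nat.sub_add_cancel h]
  | some l =>
    simp only [c] at h
    simp only [inc, dec, step, Function.update_self, Function.update_idem]
    rw [Nat.sub_add_cancel h, Function.update_eq_self]

lemma sz_inc (p : Pt e) (ℓ : Option (Fin e)) : sz (inc p ℓ) = sz p + 1 := by
  cases ℓ with
  | none => simp [sz, inc]; ring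
  | some l =>
    simp only [sz, inc, step]
    rw [Finset.sum_update_of_mem (Finset.mem_univ l), ← Finset.add_sum_erase _ _ (Finset.mem_univ l),
      Finset.erase_eq]
    ring

lemma sz_dec {p : Pt e} {ℓ : Option (Fin e)} (h : 0 < c p ℓ) : sz (dec p ℓ) + 1 = sz p := by
  conv_rhs => rw [← inc_dec h]
  rw [sz_inc]

lemma sz_eq_zero {p : Pt e} (h : sz p = 0) : p = ((0, fun _ => 0) : Pt e) := by
  simp only [sz, Nat.add_eq_zero, Finset.sum_eq_zero_iff, Finset.mem_univ,
    forall_true_left] at h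
  apply ext_c
  intro ℓ
  cases ℓ with
  | none => simpa [c] using h.1
  | some l => simpa [c] using h.2 l

lemma dstep_iff {p q : Pt e} : DStep p q ↔ ∃ ℓ, q = inc p ℓ := by
  constructor
  · rintro (h | ⟨l, h⟩)
    · exact ⟨none, h⟩
    · exact ⟨some l, h⟩
  · rintro ⟨ℓ, rfl⟩
    cases ℓ with
    | none => exact Or.inl rfl
    | some l => exact Or.inr ⟨l, rfl⟩


section Paths

variable (W : Pt e → ℕ)

def pathSet (i : Pt e) : Set ℕ :=
  {s | ∃ n, ∃ p : ℕ → Pt e, p 0 = (0, fun _ => 0) ∧ p n = i ∧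
    (∀ t < n, DStep (p t) (p (t + 1))) ∧ s = ∑ t ∈ Finset.range (n + 1), W (p t)}

lemma lptTo_def (i : Pt e) : lptTo W i = sSup (pathSet W i) := rfl

lemma path_sz {n : ℕ} {p : ℕ → Pt e} (h0 : p 0 = ((0, fun _ => 0) : Pt e))
    (hs : ∀ t < n, DStep (p t) (p (t + 1))) : ∀ t ≤ n, sz (p t) = t := by
  intro t ht
  induction t with
  | zero => rw [h0]; simp [sz]
  | succ k ih =>
    obtain ⟨ℓ, hℓ⟩ := dstep_iff.mp (hs k (by omega))
    rw [hℓ, sz_inc, ih (by omega)]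

lemma path_c_mono {n : ℕ} {p : ℕ → Pt e}
    (hs : ∀ t < n, DStep (p t) (p (t + 1))) {t u : ℕ} (htu : t ≤ u) (hu : u ≤ n)
    (ℓ : Option (Fin e)) : c (p t) ℓ ≤ c (p u) ℓ := by
  induction u with
  | zero => simp [Nat.le_zero.mp htu]
  | succ k ih =>
    rcases Nat.lt_or_ge t (k + 1) with h | h
    · obtain ⟨ℓ', hℓ'⟩ := dstep_iff.mp (hs k (by omega))
      calc c (p t) ℓ ≤ c (p k) ℓ := ih (by omega) (by omega)
        _ ≤ _ := by rw [hℓ']; exact c_le_c_inc _ _ _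
    · have : t = k + 1 := by omega
      simp [this]

lemma pathSet_extend {j i : Pt e} {ℓ : Option (Fin e)} (hℓ : 0 < c i ℓ)
    (hj : j = dec i ℓ) {s : ℕ} (hs : s ∈ pathSet W j) : s + W i ∈ pathSet W i := by
  obtain ⟨n, p, h0, hn, hst, rfl⟩ := hs
  refine ⟨n + 1, fun t => if t ≤ n then p t else i, by simpa using h0, by simp, ?_, ?_⟩
  · intro t ht
    show DStep (if t ≤ n then p t else i) (if t + 1 ≤ n then p (t + 1) else i)
    rcases Nat.lt_or_ge t n with h | h
    · rw [if_pos (by omega), if_pos (by omega)]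
      exact hst t h
    · have ht' : t = n := by omega
      subst ht'
      rw [if_pos le_rfl, if_neg (by omega), hn, hj, dstep_iff]
      exact ⟨ℓ, (inc_dec hℓ).symm⟩
  · show ∑ t ∈ Finset.range (n + 1), W (p t) + W i
      = ∑ t ∈ Finset.range (n + 1 + 1), W (if t ≤ n then p t else i)
    symm
    rw [Finset.sum_range_succ, if_neg (by omega : ¬ n + 1 ≤ n)]
    congr 1
    exact Finset.sum_congr rfl fun t ht => by
      rw [if_pos (Nat.lt_succ_iff.mp (Finset.mem_range.mp ht))]

lemma pathSet_nonempty (i : Pt e) : (pathSet W i).Nonempty := by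
  suffices H : ∀ k (i : Pt e), sz i = k → (pathSet W i).Nonempty from H _ i rfl
  intro k
  induction k using Nat.strong_induction_on with
  | _ k ih =>
  intro i h
  rcases Nat.eq_zero_or_pos k with rfl | hk
  · have : i = ((0, fun _ => 0) : Pt e) := sz_eq_zero h
    exact ⟨W i, 0, fun _ => i, by rw [this], rfl, by omega, by simp⟩
  · have hex : ∃ ℓ, 0 < c i ℓ := by
      by_contra hc
      push_neg at hc
      have hio : i = ((0, fun _ => 0) : Pt e) := ext_c fun ℓ => by
        have := hc ℓ; cases ℓ <;> simp [c] at this ⊢ <;> omega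
      rw [hio] at h
      simp [sz] at h
      omega
    obtain ⟨ℓ, hℓ⟩ := hex
    have hsz : sz (dec i ℓ) = k - 1 := by have := sz_dec hℓ; omega
    obtain ⟨s, hs⟩ := ih (k - 1) (by omega) (dec i ℓ) hsz
    exact ⟨s + W i, pathSet_extend W hℓ rfl hs⟩

lemma pathSet_trunc {i : Pt e} {s : ℕ} (hs : s ∈ pathSet W i)
    (hi : i ≠ ((0, fun _ => 0) : Pt e)) :
    ∃ ℓ, 0 < c i ℓ ∧ ∃ s', s' ∈ pathSet W (dec i ℓ) ∧ s = s' + W i := by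
  obtain ⟨n, p, h0, hn, hst, rfl⟩ := hs
  have hszn : n = sz i := by rw [← hn]; exact (path_sz h0 hst n le_rfl).symm
  have hn0 : 0 < n := by
    rcases Nat.eq_zero_or_pos n with rfl | h
    · exact absurd (sz_eq_zero hszn.symm) hi
    · exact h
  obtain ⟨ℓ, hℓ⟩ := dstep_iff.mp (hst (n - 1) (by omega))
  rw [show n - 1 + 1 = n from by omega, hn] at hℓ
  have hci : 0 < c i ℓ := by rw [hℓ, c_inc_self]; omega
  refine ⟨ℓ, hci, ∑ t ∈ Finset.range n, W (p t), ⟨n - 1, p, h0, ?_, fun t ht => hst t (by omega), by rw [show n - 1 + 1 = n from by omega]⟩, ?_⟩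
  · rw [hℓ, dec_inc]
  · rw [show n + 1 = n + 1 from rfl, Finset.sum_range_succ, hn]

lemma pathSet_bddAbove (i : Pt e) : BddAbove (pathSet W i) := by
  refine ⟨(sz i + 1) * ((Finset.range (i.1 + 1) ×ˢ Fintype.piFinset fun ℓ => Finset.range (i.2 ℓ + 1)).sup W), ?_⟩
  rintro s ⟨n, p, h0, hn, hst, rfl⟩
  have hszn : n = sz i := by rw [← hn]; exact (path_sz h0 hst n le_rfl).symm
  calc ∑ t ∈ Finset.range (n + 1), W (p t)
      ≤ ∑ _t ∈ Finset.range (n + 1), ((Finset.range (i.1 + 1) ×ˢ Fintype.piFinset fun ℓ => Finset.range (i.2 ℓ + 1)).sup W) := by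
        refine Finset.sum_le_sum fun t ht => Finset.le_sup ?_
        have hmem := Finset.mem_range.mp ht
        have h1 : c (p t) none ≤ c (p n) none := path_c_mono hst (by omega) le_rfl none
        have h2 : ∀ l, c (p t) (some l) ≤ c (p n) (some l) :=
          fun l => path_c_mono hst (by omega) le_rfl (some l)
        rw [hn] at h1 h2
        simp only [c] at h1 h2
        simp only [Finset.mem_product, Finset.mem_range, Fintype.mem_piFinset]
        exact ⟨by omega, fun l => by have := h2 l; omega⟩
    _ = (n + 1) * _ := by rw [Finset.sum_const, Finset.card_range, smul_eq_mul]
    _ ≤ _ := by apply Nat.mul_le_mul_right; omega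

lemma lptTo_mem (i : Pt e) : lptTo W i ∈ pathSet W i :=
  Nat.sSup_mem (pathSet_nonempty W i) (pathSet_bddAbove W i)

lemma le_lptTo {i : Pt e} {s : ℕ} (hs : s ∈ pathSet W i) : s ≤ lptTo W i :=
  le_csSup (pathSet_bddAbove W i) hs

lemma lpt_rec (i : Pt e) :
    lptTo W i = W i + Finset.sup Finset.univ
      (fun ℓ : Option (Fin e) => if 0 < c i ℓ then lptTo W (dec i ℓ) else 0) := by
  rcases eq_or_ne i ((0, fun _ => 0) : Pt e) with rfl | hi
  · have hz : ∀ ℓ : Option (Fin e), ¬ (0 < c ((0, fun _ => 0) : Pt e) ℓ) := by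
      intro ℓ; cases ℓ <;> simp [c]
    have hsup : (Finset.univ.sup fun ℓ : Option (Fin e) =>
        if 0 < c ((0, fun _ => 0) : Pt e) ℓ then lptTo W (dec ((0, fun _ => 0) : Pt e) ℓ) else 0) = 0 := by
      simp only [if_neg (hz _)]
      simp
    rw [hsup, add_zero]
    apply le_antisymm
    · obtain ⟨n, p, h0, hn, hst, hsum⟩ := lptTo_mem W ((0, fun _ => 0) : Pt e)
      have hszn : n = 0 := by
        have := path_sz h0 hst n le_rfl
        rw [hn] at this
        simpa [sz] using this.symm
      subst hszn
      rw [hsum, Finset.sum_range_one, h0]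
    · exact le_lptTo W ⟨0, fun _ => ((0, fun _ => 0) : Pt e), rfl, rfl, by omega, by simp⟩
  · apply le_antisymm
    · obtain ⟨ℓ, hℓ, s', hs', heq⟩ := pathSet_trunc W (lptTo_mem W i) hi
      rw [heq, add_comm]
      apply Nat.add_le_add_left
      calc s' ≤ lptTo W (dec i ℓ) := le_lptTo W hs'
        _ ≤ _ := by
            have h1 := Finset.le_sup (f := fun ℓ' : Option (Fin e) =>
              if 0 < c i ℓ' then lptTo W (dec i ℓ') else 0) (Finset.mem_univ ℓ)
            simp only [if_pos hℓ] at h1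
            exact h1
    · obtain ⟨ℓ₀, _, hℓ₀⟩ := Finset.exists_mem_eq_sup Finset.univ Finset.univ_nonempty
        (fun ℓ : Option (Fin e) => if 0 < c i ℓ then lptTo W (dec i ℓ) else 0)
      rw [hℓ₀]
      by_cases hc : 0 < c i ℓ₀
      · rw [if_pos hc, add_comm]
        exact le_lptTo W (pathSet_extend W hc rfl (lptTo_mem W (dec i ℓ₀)))
      · rw [if_neg hc, add_zero]
        obtain ⟨ℓ, hℓ, s', hs', heq⟩ := pathSet_trunc W (lptTo_mem W i) hi
        omega

lemma lpt_dec_le {i : Pt e} {ℓ : Option (Fin e)} (hℓ : 0 < c i ℓ) :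
    lptTo W (dec i ℓ) ≤ lptTo W i := by
  rw [lpt_rec W i]
  have h1 := Finset.le_sup (f := fun ℓ' : Option (Fin e) =>
    if 0 < c i ℓ' then lptTo W (dec i ℓ') else 0) (Finset.mem_univ ℓ)
  simp only [if_pos hℓ] at h1
  omega

lemma lpt_mono {i j : Pt e} (h : ∀ ℓ, c i ℓ ≤ c j ℓ) : lptTo W i ≤ lptTo W j := by
  revert h
  suffices H : ∀ k (j : Pt e), sz j = k → (∀ ℓ, c i ℓ ≤ c j ℓ) → lptTo W i ≤ lptTo W j from
    H _ j rfl
  intro k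
  induction k using Nat.strong_induction_on with
  | _ k ih =>
  intro j hsz h
  by_cases heq : ∀ ℓ, c i ℓ = c j ℓ
  · rw [ext_c heq]
  · push_neg at heq
    obtain ⟨ℓ, hℓ⟩ := heq
    have hlt : c i ℓ < c j ℓ := lt_of_le_of_ne (h ℓ) hℓ
    have hc : 0 < c j ℓ := by omega
    have hle : ∀ ℓ', c i ℓ' ≤ c (dec j ℓ) ℓ' := by
      intro ℓ'
      rcases eq_or_ne ℓ' ℓ with he | hne
      · subst he
        have h2 : c (dec j ℓ') ℓ' + 1 = c j ℓ' := by
          conv_rhs => rw [← inc_dec hc]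
          rw [c_inc_self]
        omega
      · have : c (dec j ℓ) ℓ' = c j ℓ' := by
          cases ℓ' <;> cases ℓ <;> simp_all [c, dec] <;>
            rw [Function.update_of_ne (by simp_all)]
        rw [this]; exact h ℓ'
    have := sz_dec hc
    calc lptTo W i ≤ lptTo W (dec j ℓ) := ih (sz (dec j ℓ)) (by omega) _ rfl hle
      _ ≤ lptTo W j := lpt_dec_le W hc

end Paths


section Box

lemma c_inc_ne {p : Pt e} {ℓ ℓ' : Option (Fin e)} (h : ℓ' ≠ ℓ) : c (inc p ℓ) ℓ' = c p ℓ' := by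
  cases ℓ <;> cases ℓ' <;> simp_all [c, inc, step] <;>
    rw [Function.update_of_ne (by simp_all)]

lemma c_dec_self (p : Pt e) (ℓ : Option (Fin e)) : c (dec p ℓ) ℓ = c p ℓ - 1 := by
  cases ℓ <;> simp [c, dec]

lemma c_dec_ne {p : Pt e} {ℓ ℓ' : Option (Fin e)} (h : ℓ' ≠ ℓ) : c (dec p ℓ) ℓ' = c p ℓ' := by
  cases ℓ <;> cases ℓ' <;> simp_all [c, dec] <;>
    rw [Function.update_of_ne (by simp_all)]

variable (m : ℕ) (N : Fin e → ℕ)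

def InB (p : Pt e) : Prop := p.1 < m ∧ ∀ ℓ, p.2 ℓ < N ℓ

def bd : Option (Fin e) → ℕ
  | none => m
  | some l => N l

def mir (p : Pt e) : Pt e := (m - 1 - p.1, fun ℓ => N ℓ - 1 - p.2 ℓ)

lemma inB_iff {p : Pt e} : InB m N p ↔ ∀ ℓ, c p ℓ < bd m N ℓ := by
  constructor
  · rintro ⟨h1, h2⟩ ℓ
    cases ℓ
    · exact h1
    · exact h2 _
  · intro h
    exact ⟨h none, fun l => h (some l)⟩

lemma c_mir (p : Pt e) (ℓ : Option (Fin e)) : c (mir m N p) ℓ = bd m N ℓ - 1 - c p ℓ := by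
  cases ℓ <;> rfl

lemma mir_inB {p : Pt e} (h : InB m N p) : InB m N (mir m N p) := by
  rw [inB_iff] at h ⊢
  intro ℓ
  have := h ℓ
  rw [c_mir]
  omega

lemma mir_mir {p : Pt e} (h : InB m N p) : mir m N (mir m N p) = p := by
  rw [inB_iff] at h
  apply ext_c
  intro ℓ
  have := h ℓ
  rw [c_mir, c_mir]
  omega

lemma dec_inB {p : Pt e} (h : InB m N p) (ℓ : Option (Fin e)) : InB m N (dec p ℓ) := by
  rw [inB_iff] at h ⊢
  intro ℓ'
  rcases eq_or_ne ℓ' ℓ with rfl | hne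
  · rw [c_dec_self]; have := h ℓ'; omega
  · rw [c_dec_ne hne]; exact h ℓ'

lemma inc_mir_inB {p : Pt e} (h : InB m N p) {ℓ : Option (Fin e)} (hc : 0 < c p ℓ) :
    InB m N (inc (mir m N p) ℓ) := by
  rw [inB_iff] at h ⊢
  intro ℓ'
  rcases eq_or_ne ℓ' ℓ with rfl | hne
  · rw [c_inc_self, c_mir]; have := h ℓ'; omega
  · rw [c_inc_ne hne, c_mir]; have := h ℓ'; omega

lemma not_inB_inc_mir {p : Pt e} (h : InB m N p) {ℓ : Option (Fin e)} (hc : c p ℓ = 0) :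
    ¬ InB m N (inc (mir m N p) ℓ) := by
  rw [inB_iff] at h
  rw [inB_iff]
  push_neg
  refine ⟨ℓ, ?_⟩
  rw [c_inc_self, c_mir]
  have := h ℓ
  omega

lemma mir_dec {p : Pt e} (h : InB m N p) {ℓ : Option (Fin e)} (hc : 0 < c p ℓ) :
    mir m N (dec p ℓ) = inc (mir m N p) ℓ := by
  rw [inB_iff] at h
  apply ext_c
  intro ℓ'
  rcases eq_or_ne ℓ' ℓ with rfl | hne
  · rw [c_mir, c_dec_self, c_inc_self, c_mir]
    have := h ℓ'
    omega
  · rw [c_mir, c_dec_ne hne, c_inc_ne hne, c_mir]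

lemma mir_inc_mir {p : Pt e} (h : InB m N p) {ℓ : Option (Fin e)} (hc : 0 < c p ℓ) :
    mir m N (inc (mir m N p) ℓ) = dec p ℓ := by
  rw [← mir_dec m N h hc, mir_mir m N (dec_inB m N h ℓ)]

def Mx (π : Pt e → ℕ) (p : Pt e) : ℕ := Finset.univ.sup fun ℓ : Option (Fin e) => π (inc p ℓ)

def PiW (W : Pt e → ℕ) : Pt e → ℕ := fun p => if InB m N p then lptTo W (mir m N p) else 0

def WOf (π : Pt e → ℕ) : Pt e → ℕ :=
  fun p => if InB m N p then π (mir m N p) - Mx π (mir m N p) else 0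

lemma lpt_WOf (π : Pt e → ℕ) (hsupp : ∀ q, π q ≠ 0 → InB m N q)
    (hmono : ∀ q ℓ, π (inc q ℓ) ≤ π q) :
    ∀ p : Pt e, InB m N p → lptTo (WOf m N π) p = π (mir m N p) := by
  suffices H : ∀ k (p : Pt e), sz p = k → InB m N p → lptTo (WOf m N π) p = π (mir m N p) from
    fun p => H (sz p) p rfl
  intro k
  induction k using Nat.strong_induction_on with
  | _ k ih =>
  intro p hsz hp
  rw [lpt_rec]
  have hW : WOf m N π p = π (mir m N p) - Mx π (mir m N p) := if_pos hp
  have hsup : (Finset.univ.sup fun ℓ : Option (Fin e) =>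
      if 0 < c p ℓ then lptTo (WOf m N π) (dec p ℓ) else 0) = Mx π (mir m N p) := by
    unfold Mx
    refine Finset.sup_congr rfl fun ℓ _ => ?_
    by_cases hc : 0 < c p ℓ
    · rw [if_pos hc, ih (sz (dec p ℓ)) (by have := sz_dec hc; omega) _ rfl (dec_inB m N hp ℓ),
        mir_dec m N hp hc]
    · rw [if_neg hc]
      by_contra hne
      exact not_inB_inc_mir m N hp (ℓ := ℓ) (by omega) (hsupp _ fun h0 => hne (by rw [h0]))
  rw [hW, hsup]
  have hMx : Mx π (mir m N p) ≤ π (mir m N p) := Finset.sup_le fun ℓ _ => hmono _ ℓ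
  omega

lemma WOf_PiW (W : Pt e → ℕ) {p : Pt e} (hp : InB m N p) :
    WOf m N (PiW m N W) p = W p := by
  have h1 : PiW m N W (mir m N p) = lptTo W p := by
    rw [PiW, if_pos (mir_inB m N hp), mir_mir m N hp]
  have h2 : Mx (PiW m N W) (mir m N p) = Finset.univ.sup
      (fun ℓ : Option (Fin e) => if 0 < c p ℓ then lptTo W (dec p ℓ) else 0) := by
    unfold Mx
    refine Finset.sup_congr rfl fun ℓ _ => ?_
    by_cases hc : 0 < c p ℓ
    · rw [if_pos hc, PiW]
      simp only [if_pos (inc_mir_inB m N hp hc), mir_inc_mir m N hp hc]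
    · rw [if_neg hc, PiW]
      simp only [if_neg (not_inB_inc_mir m N hp (ℓ := ℓ) (by omega))]
  rw [WOf, if_pos hp]  -- might need simp only
  rw [h1, h2]
  have := lpt_rec W p
  omega

end Box


section Bij

variable (m : ℕ) (N : Fin e → ℕ)

lemma isPart_mono {π : Pt e → ℕ} (h : IsPart π) {i j : Pt e}
    (hle : ∀ ℓ, c i ℓ ≤ c j ℓ) : π j ≤ π i :=
  h.2 i j (hle none) (fun l => hle (some l))

lemma pi0_eq {π : Pt e → ℕ} {ρ : (Fin e → ℕ) → ℕ} (hπ : IsPart π)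
    (h : sh1 π = Diag ρ) (i' : Fin e → ℕ) : π (0, i') = ρ i' := by
  have key : ∀ k, (1 ≤ k ∧ k ≤ π (0, i')) ↔ (1 ≤ k ∧ k ≤ ρ i') := by
    intro k
    have hk := Set.ext_iff.mp h (i', k)
    simp only [sh1, Diag, Set.mem_setOf_eq] at hk
    constructor
    · intro hh
      exact hk.mp ⟨0, hh.1, hh.2⟩
    · intro hh
      obtain ⟨i₁, h1, h2⟩ := hk.mpr hh
      exact ⟨h1, h2.trans (hπ.2 (0, i') (i₁, i') (Nat.zero_le _) fun l => le_rfl)⟩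
  have h1 := key (π (0, i'))
  have h2 := key (ρ i')
  omega

lemma sh1_eq_of {π : Pt e → ℕ} {ρ : (Fin e → ℕ) → ℕ} (hπ : IsPart π)
    (h0 : ∀ i', π (0, i') = ρ i') : sh1 π = Diag ρ := by
  ext ⟨i', k⟩
  simp only [sh1, Diag, Set.mem_setOf_eq]
  constructor
  · rintro ⟨i₁, h1, h2⟩
    exact ⟨h1, by rw [← h0 i']; exact h2.trans (hπ.2 (0, i') (i₁, i') (Nat.zero_le _) fun l => le_rfl)⟩
  · rintro ⟨h1, h2⟩
    exact ⟨0, h1, by rw [h0 i']; exact h2⟩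

lemma inB_finite : {p : Pt e | InB m N p}.Finite := by
  have : {p : Pt e | InB m N p} ⊆
      ↑((Finset.range m) ×ˢ Fintype.piFinset fun ℓ => Finset.range (N ℓ)) := by
    rintro p ⟨h1, h2⟩
    simp only [Finset.coe_product, Set.mem_prod, Finset.mem_coe, Finset.mem_range,
      Fintype.mem_piFinset]
    exact ⟨h1, fun l => by simpa using h2 l⟩
  exact Set.Finite.subset (Finset.finite_toSet _) this

lemma PiW_isPart (W : Pt e → ℕ) : IsPart (PiW m N W) := by
  constructor
  · refine Set.Finite.subset (inB_finite m N) ?_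
    intro p hp
    simp only [Function.mem_support, PiW] at hp
    by_contra hin
    exact hp (if_neg hin)
  · intro i j h1 h2
    have hle : ∀ ℓ, c i ℓ ≤ c j ℓ := fun ℓ => by
      cases ℓ with
      | none => exact h1
      | some l => exact h2 l
    by_cases hj : InB m N j
    · have hi : InB m N i := by
        rw [inB_iff] at hj ⊢
        intro ℓ
        exact lt_of_le_of_lt (hle ℓ) (hj ℓ)
      simp only [PiW, if_pos hj, if_pos hi]
      refine lpt_mono W fun ℓ => ?_
      rw [c_mir, c_mir]
      have := hle ℓ
      omega
    · simp only [PiW, if_neg hj]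
      exact Nat.zero_le _
  
lemma PiW_supp (W : Pt e → ℕ) : ∀ q, PiW m N W q ≠ 0 → InB m N q := by
  intro q hq
  by_contra hin
  exact hq (if_neg hin)

lemma mir_zero (hm : 0 < m) {i' : Fin e → ℕ} (hin : ∀ ℓ, i' ℓ < N ℓ) :
    mir m N ((m - 1, fun ℓ => N ℓ - 1 - i' ℓ) : Pt e) = ((0, i') : Pt e) := by
  apply ext_c
  intro ℓ
  rw [c_mir]
  cases ℓ with
  | none => show m - 1 - (m - 1) = 0; omega
  | some l => have := hin l; show N l - 1 - (N l - 1 - i' l) = i' l; omega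

lemma PiW_sh1 (hm : 0 < m) (W : Pt e → ℕ) {ρ : (Fin e → ℕ) → ℕ}
    (hρbox : ∀ i', ρ i' ≠ 0 → ∀ ℓ, i' ℓ < N ℓ)
    (hev : ∀ i' : Fin e → ℕ, (∀ ℓ, i' ℓ < N ℓ) →
      lptTo W (m - 1, fun ℓ => N ℓ - 1 - i' ℓ) = ρ i') :
    sh1 (PiW m N W) = Diag ρ := by
  refine sh1_eq_of (PiW_isPart m N W) fun i' => ?_
  by_cases hin : ∀ ℓ, i' ℓ < N ℓ
  · have hInB : InB m N ((0, i') : Pt e) := ⟨hm, hin⟩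
    simp only [PiW, if_pos hInB]
    rw [show mir m N ((0, i') : Pt e) = ((m - 1, fun ℓ => N ℓ - 1 - i' ℓ) : Pt e) from ?_]
    · exact hev i' hin
    · apply ext_c
      intro ℓ
      rw [c_mir]
      cases ℓ with
      | none => show m - 1 - 0 = m - 1; omega
      | some l => rfl
  · have hnin : ¬ InB m N ((0, i') : Pt e) := fun h => hin h.2
    simp only [PiW, if_neg hnin]
    by_contra h
    exact hin (hρbox i' fun h0 => h h0.symm)

lemma WOf_event (hm : 0 < m) {π : Pt e → ℕ} {ρ : (Fin e → ℕ) → ℕ} (hπ : IsPart π)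
    (hsupp : ∀ q, π q ≠ 0 → InB m N q) (hsh : sh1 π = Diag ρ) :
    ∀ i' : Fin e → ℕ, (∀ ℓ, i' ℓ < N ℓ) →
      lptTo (WOf m N π) (m - 1, fun ℓ => N ℓ - 1 - i' ℓ) = ρ i' := by
  intro i' hin
  have hInB : InB m N ((m - 1, fun ℓ => N ℓ - 1 - i' ℓ) : Pt e) :=
    ⟨by omega, fun ℓ => by have := hin ℓ; show N ℓ - 1 - i' ℓ < N ℓ; omega⟩
  rw [lpt_WOf m N π hsupp (fun q ℓ => isPart_mono hπ (c_le_c_inc q ℓ)) _ hInB,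
    mir_zero m N hm hin, pi0_eq hπ hsh]

lemma PiW_WOf {π : Pt e → ℕ} (hπ : IsPart π) (hsupp : ∀ q, π q ≠ 0 → InB m N q) :
    PiW m N (WOf m N π) = π := by
  funext p
  by_cases hp : InB m N p
  · simp only [PiW, if_pos hp]
    rw [lpt_WOf m N π hsupp (fun q ℓ => isPart_mono hπ (c_le_c_inc q ℓ)) _ (mir_inB m N hp),
      mir_mir m N hp]
  · simp only [PiW, if_neg hp]
    by_contra h
    exact hp (hsupp p fun h0 => h h0.symm)

lemma WOf_PiW_full (W : Pt e → ℕ) (hW : ∀ q, W q ≠ 0 → InB m N q) :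
    WOf m N (PiW m N W) = W := by
  funext p
  by_cases hp : InB m N p
  · exact WOf_PiW m N W hp
  · simp only [WOf, if_neg hp]
    by_contra h
    exact hp (hW p fun h0 => h h0.symm)

end Bij


section Corners

variable (m : ℕ) (N : Fin e → ℕ)

lemma corner_iff {π : Pt e → ℕ} {i₁ : ℕ} {i' : Fin e → ℕ} {k : ℕ} :
    Corner π i₁ i' k ↔ Mx π (i₁, i') < k ∧ k ≤ π (i₁, i') := by
  constructor
  · rintro ⟨h1, h2, h3, h4⟩
    refine ⟨?_, h2⟩
    rw [Mx]
    refine (Finset.sup_lt_iff (show (⊥ : ℕ) < k from h1)).mpr ?_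
    rintro (_ | l) _
    · exact h3
    · exact h4 l
  · rintro ⟨h1, h2⟩
    have hk : 0 < k := lt_of_le_of_lt (Nat.zero_le _) h1
    rw [Mx] at h1
    have hall := (Finset.sup_lt_iff (show (⊥ : ℕ) < k from hk)).mp h1
    exact ⟨hk, h2, hall none (Finset.mem_univ _), fun l => hall (some l) (Finset.mem_univ _)⟩

lemma cI_eq (π : Pt e → ℕ) (hsupp : ∀ q, π q ≠ 0 → InB m N q) (i₁ : ℕ) :
    cI π i₁ = ∑ i' ∈ Fintype.piFinset (fun ℓ => Finset.range (N ℓ)),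
      (π (i₁, i') - Mx π (i₁, i')) := by
  have hset : {q : (Fin e → ℕ) × ℕ | Corner π i₁ q.1 q.2} =
      ↑((Fintype.piFinset fun ℓ => Finset.range (N ℓ)).biUnion
        (fun i' => {i'} ×ˢ Finset.Ioc (Mx π (i₁, i')) (π (i₁, i')))) := by
    ext ⟨i', k⟩
    simp only [Set.mem_setOf_eq]
    constructor
    · intro h
      rcases corner_iff.mp h with ⟨h1, h2⟩
      have hne : π (i₁, i') ≠ 0 := by omega
      refine Finset.mem_coe.mpr (Finset.mem_biUnion.mpr ⟨i', ?_, ?_⟩)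
      · rw [Fintype.mem_piFinset]
        intro l
        rw [Finset.mem_range]
        exact (hsupp _ hne).2 l
      · rw [Finset.mem_product]
        exact ⟨Finset.mem_singleton_self _, Finset.mem_Ioc.mpr ⟨h1, h2⟩⟩
    · intro h
      obtain ⟨j, hjmem, hj⟩ := Finset.mem_biUnion.mp (Finset.mem_coe.mp h)
      rw [Finset.mem_product, Finset.mem_singleton] at hj
      obtain ⟨h0, hk⟩ := hj
      have h0' : i' = j := h0
      subst h0'
      have hk' := Finset.mem_Ioc.mp hk
      exact corner_iff.mpr ⟨hk'.1, hk'.2⟩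
  rw [cI, hset, Nat.card_coe_set_eq, Set.ncard_coe_finset, Finset.card_biUnion]
  · exact Finset.sum_congr rfl fun i' _ => by
      rw [Finset.card_product, Finset.card_singleton, Nat.card_Ioc, one_mul]
  · intro a _ b _ hab
    simp only [Finset.disjoint_left, Finset.mem_product, Finset.mem_singleton]
    rintro ⟨x, k⟩ ⟨hx1, _⟩ ⟨hx2, _⟩
    have ha : x = a := hx1
    have hb : x = b := hx2
    exact hab (ha ▸ hb)

lemma cI_zero (π : Pt e → ℕ) (hsupp : ∀ q, π q ≠ 0 → InB m N q) {i₁ : ℕ}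
    (hi : m ≤ i₁) : cI π i₁ = 0 := by
  rw [cI_eq m N π hsupp i₁]
  refine Finset.sum_eq_zero fun i' _ => ?_
  have hz : π (i₁, i') = 0 := by
    by_contra h
    exact absurd (hsupp _ h).1 (by omega)
  rw [hz]
  simp

lemma sum_box_eq (π : Pt e → ℕ) :
    ∑ i₁ ∈ Finset.range m, ∑ i' ∈ Fintype.piFinset (fun ℓ => Finset.range (N ℓ)),
      (π (i₁, i') - Mx π (i₁, i'))
    = ∑ i₁ ∈ Finset.range m, ∑ i' ∈ Fintype.piFinset (fun ℓ => Finset.range (N ℓ)),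
      WOf m N π (i₁, i') := by
  have key : ∀ p : Pt e,
      p ∈ Finset.range m ×ˢ Fintype.piFinset (fun ℓ => Finset.range (N ℓ)) ↔ InB m N p := by
    intro p
    rw [Finset.mem_product, Finset.mem_range, Fintype.mem_piFinset]
    constructor
    · rintro ⟨h1, h2⟩
      exact ⟨h1, fun l => Finset.mem_range.mp (h2 l)⟩
    · rintro ⟨h1, h2⟩
      exact ⟨h1, fun l => Finset.mem_range.mpr (h2 l)⟩
  rw [← Finset.sum_product (f := fun p : Pt e => π p - Mx π p),
      ← Finset.sum_product (f := fun p : Pt e => WOf m N π p)]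
  refine Finset.sum_nbij' (i := fun p => mir m N p) (j := fun p => mir m N p)
    ?_ ?_ ?_ ?_ ?_
  · intro p hp
    exact (key _).mpr (mir_inB m N ((key _).mp hp))
  · intro p hp
    exact (key _).mpr (mir_inB m N ((key _).mp hp))
  · intro p hp
    exact mir_mir m N ((key _).mp hp)
  · intro p hp
    exact mir_mir m N ((key _).mp hp)
  · intro p hp
    have hp' := (key _).mp hp
    simp only [WOf, if_pos (mir_inB m N hp'), mir_mir m N hp']

lemma sum_cI (π : Pt e → ℕ) (hsupp : ∀ q, π q ≠ 0 → InB m N q) :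
    ∑ i₁ ∈ Finset.range m, cI π i₁
      = ∑ i₁ ∈ Finset.range m, ∑ i' ∈ Fintype.piFinset (fun ℓ => Finset.range (N ℓ)),
        WOf m N π (i₁, i') := by
  rw [Finset.sum_congr rfl (fun i₁ _ => cI_eq m N π hsupp i₁), sum_box_eq m N π]

end Corners


section Final

variable (m : ℕ) (N : Fin e → ℕ)

lemma inBox'_iff (π : Pt e → ℕ) : InBox' m N π ↔ ∀ p, π p ≠ 0 → InB m N p := Iff.rfl

lemma part_le_top {π : Pt e → ℕ} (hπ : IsPart π) (p : Pt e) :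
    π p ≤ π ((0, fun _ => 0) : Pt e) :=
  isPart_mono hπ fun ℓ => by cases ℓ <;> exact Nat.zero_le _

lemma T_finite (ρ : (Fin e → ℕ) → ℕ) :
    {π : Pt e → ℕ | IsPart π ∧ InBox' m N π ∧ sh1 π = Diag ρ}.Finite := by
  classical
  set R := ρ (fun _ => 0) with hR
  set B := Finset.range m ×ˢ Fintype.piFinset fun ℓ => Finset.range (N ℓ) with hB
  have hRlt : ∀ x : ℕ, min x R < R + 1 := fun x => Nat.lt_succ_of_le (min_le_right _ _)
  refine Set.Finite.of_finite_image (f := fun (π : Pt e → ℕ) =>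
    fun p : ↥B => (⟨min (π p.1) R, hRlt _⟩ : Fin (R + 1))) (Set.toFinite _) ?_
  rintro π₁ ⟨hπ₁, hb₁, hs₁⟩ π₂ ⟨hπ₂, hb₂, hs₂⟩ hEq
  have hbound : ∀ (π : Pt e → ℕ), IsPart π → sh1 π = Diag ρ → ∀ p, π p ≤ R := by
    intro π hπ hs p
    rw [hR, ← pi0_eq hπ hs]
    exact part_le_top hπ p
  funext p
  by_cases hp : InB m N p
  · have hpB : p ∈ B := by
      rw [hB, Finset.mem_product, Finset.mem_range, Fintype.mem_piFinset]
      exact ⟨hp.1, fun l => Finset.mem_range.mpr (hp.2 l)⟩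
    have := congrFun hEq ⟨p, hpB⟩
    have h1 := hbound π₁ hπ₁ hs₁ p
    have h2 := hbound π₂ hπ₂ hs₂ p
    simp only [Fin.mk.injEq] at this
    rw [min_eq_left h1, min_eq_left h2] at this
    exact this
  · have h1 : π₁ p = 0 := by
      by_contra h
      exact hp (hb₁ p h)
    have h2 : π₂ p = 0 := by
      by_contra h
      exact hp (hb₂ p h)
    rw [h1, h2]

lemma eval_monom (q : ℝ) (π : Pt e → ℕ) (hsupp : ∀ p, π p ≠ 0 → InB m N p) :
    MvPolynomial.eval (fun _ : ℕ => q) (∏ᶠ i : ℕ, MvPolynomial.X i ^ cI π i)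
      = q ^ (∑ i₁ ∈ Finset.range m, cI π i₁) := by
  have hsub : (Function.mulSupport fun i : ℕ => (MvPolynomial.X i : MvPolynomial ℕ ℝ) ^ cI π i)
      ⊆ ↑(Finset.range m) := by
    intro i hi
    rw [Function.mem_mulSupport] at hi
    by_contra h
    rw [cI_zero m N π hsupp (by simpa using h), pow_zero] at hi
    exact hi rfl
  rw [finprod_eq_prod_of_mulSupport_subset _ hsub, map_prod]
  simp only [map_pow, MvPolynomial.eval_X]
  rw [Finset.prod_pow_eq_pow_sum]

end Final

end LPPAux

/-- Last passage percolation with i.i.d. geometric weights on the box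
`[n₁] × [n₂] × ⋯ × [n_d]` (here `m = n₁` and `N` lists `n₂, …, n_d`): the
probability of the event `{G(n₁, n - i) = ρ_i for all i ∈ [n₂]×⋯×[n_d]}` — written
as the sum, over weight configurations `W` supported in the box realizing the event,
of `∏ (1-q) q^{W(i)}` — equals `(1-q)^{n₁⋯n_d} · g_ρ(q, …, q)`. -/
theorem lpp_distribution {e : ℕ} (m : ℕ) (hm : 0 < m) (N : Fin e → ℕ)
    (q : ℝ) (hq0 : 0 < q) (hq1 : q < 1)
    (ρ : (Fin e → ℕ) → ℕ) (hρ : IsPart' ρ)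
    (hρbox : ∀ i', ρ i' ≠ 0 → ∀ ℓ, i' ℓ < N ℓ) :
    ∑' W : {W : ℕ × (Fin e → ℕ) → ℕ //
        (∀ p, W p ≠ 0 → p.1 < m ∧ ∀ ℓ, p.2 ℓ < N ℓ) ∧
        ∀ i' : Fin e → ℕ, (∀ ℓ, i' ℓ < N ℓ) →
          lptTo W (m - 1, fun ℓ => N ℓ - 1 - i' ℓ) = ρ i'},
      ∏ i₁ : Fin m, ∏ v : (∀ ℓ : Fin e, Fin (N ℓ)),
        ((1 - q) * q ^ (W.1 (i₁, fun ℓ => (v ℓ : ℕ))))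
    = (1 - q) ^ (m * ∏ ℓ, N ℓ) * MvPolynomial.eval (fun _ : ℕ => q) (gR e m N ρ) := by
  classical
  open LPPAux in
  set T : Set ((ℕ × (Fin e → ℕ)) → ℕ) :=
    {π : (ℕ × (Fin e → ℕ)) → ℕ | IsPart π ∧ InBox' m N π ∧ sh1 π = Diag ρ} with hTdef
  have hTfin : T.Finite := LPPAux.T_finite m N ρ
  -- the summand as a power of q
  have hsummand : ∀ (W : (ℕ × (Fin e → ℕ)) → ℕ),
      (∏ i₁ : Fin m, ∏ v : (∀ ℓ : Fin e, Fin (N ℓ)), ((1 - q) * q ^ (W (↑i₁, fun ℓ => (v ℓ : ℕ)))))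
      = (1 - q) ^ (m * ∏ ℓ, N ℓ) *
        q ^ (∑ i₁ ∈ Finset.range m,
          ∑ i' ∈ Fintype.piFinset fun ℓ => Finset.range (N ℓ), W (i₁, i')) := by
    intro W
    have h1 : ∀ i₁ : ℕ, (∑ v : (∀ ℓ : Fin e, Fin (N ℓ)), W (i₁, fun ℓ => (v ℓ : ℕ)))
        = ∑ i' ∈ Fintype.piFinset fun ℓ => Finset.range (N ℓ), W (i₁, i') := by
      intro i₁
      refine Finset.sum_bij (fun v _ => fun ℓ => (v ℓ : ℕ)) ?_ ?_ ?_ ?_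
      · intro v _
        rw [Fintype.mem_piFinset]
        exact fun ℓ => Finset.mem_range.mpr (v ℓ).isLt
      · intro v₁ _ v₂ _ h
        funext ℓ
        exact Fin.ext (congrFun h ℓ)
      · intro f hf
        rw [Fintype.mem_piFinset] at hf
        exact ⟨fun ℓ => ⟨f ℓ, Finset.mem_range.mp (hf ℓ)⟩, Finset.mem_univ _, rfl⟩
      · intro v _
        rfl
    calc (∏ i₁ : Fin m, ∏ v : (∀ ℓ : Fin e, Fin (N ℓ)), ((1 - q) * q ^ (W (↑i₁, fun ℓ => (v ℓ : ℕ)))))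
        = ∏ i₁ : Fin m, ((1 - q) ^ (∏ ℓ, N ℓ) *
            q ^ (∑ i' ∈ Fintype.piFinset fun ℓ => Finset.range (N ℓ), W (↑i₁, i'))) := by
          refine Finset.prod_congr rfl fun i₁ _ => ?_
          rw [Finset.prod_mul_distrib, Finset.prod_const, Finset.prod_pow_eq_pow_sum, h1]
          congr 2
          simp [Finset.card_univ, Fintype.card_pi]
      _ = _ := by
          rw [Finset.prod_mul_distrib, Finset.prod_const, Finset.prod_pow_eq_pow_sum,
            Finset.card_univ, Fintype.card_fin, ← pow_mul, mul_comm (∏ ℓ, N ℓ) m]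
          congr 1
          exact congrArg (q ^ ·)
            (Fin.sum_univ_eq_sum_range
              (fun i₁ => ∑ i' ∈ Fintype.piFinset fun ℓ => Finset.range (N ℓ), W (i₁, i')) m)
  -- the equivalence between weight configurations and partitions
  have hmemT : ∀ (W : (ℕ × (Fin e → ℕ)) → ℕ),
      (∀ p, W p ≠ 0 → p.1 < m ∧ ∀ ℓ, p.2 ℓ < N ℓ) →
      (∀ i' : Fin e → ℕ, (∀ ℓ, i' ℓ < N ℓ) →
        lptTo W (m - 1, fun ℓ => N ℓ - 1 - i' ℓ) = ρ i') →
      LPPAux.PiW m N W ∈ T := by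
    intro W hW hev
    refine ⟨LPPAux.PiW_isPart m N W, LPPAux.PiW_supp m N W, LPPAux.PiW_sh1 m N hm W hρbox hev⟩
  have hmemS : ∀ π ∈ T,
      (∀ p, LPPAux.WOf m N π p ≠ 0 → p.1 < m ∧ ∀ ℓ, p.2 ℓ < N ℓ) ∧
      (∀ i' : Fin e → ℕ, (∀ ℓ, i' ℓ < N ℓ) →
        lptTo (LPPAux.WOf m N π) (m - 1, fun ℓ => N ℓ - 1 - i' ℓ) = ρ i') := by
    rintro π ⟨hπ, hb, hs⟩
    constructor
    · intro p hp
      by_contra h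
      exact hp (if_neg h)
    · exact LPPAux.WOf_event m N hm hπ hb hs
  let S := {W : ℕ × (Fin e → ℕ) → ℕ //
      (∀ p, W p ≠ 0 → p.1 < m ∧ ∀ ℓ, p.2 ℓ < N ℓ) ∧
      ∀ i' : Fin e → ℕ, (∀ ℓ, i' ℓ < N ℓ) →
        lptTo W (m - 1, fun ℓ => N ℓ - 1 - i' ℓ) = ρ i'}
  let Φ : S ≃ ↥T :=
    { toFun := fun W => ⟨LPPAux.PiW m N W.1, hmemT W.1 W.2.1 W.2.2⟩
      invFun := fun π => ⟨LPPAux.WOf m N π.1, hmemS π.1 π.2⟩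
      left_inv := fun W => Subtype.ext (LPPAux.WOf_PiW_full m N W.1 W.2.1)
      right_inv := fun π => Subtype.ext (LPPAux.PiW_WOf m N π.2.1 π.2.2.1) }
  haveI : Fintype ↥T := hTfin.fintype
  haveI : Fintype S := Fintype.ofEquiv _ Φ.symm
  -- evaluate gR
  have hgR : MvPolynomial.eval (fun _ : ℕ => q) (gR e m N ρ)
      = ∑ π ∈ hTfin.toFinset, q ^ (∑ i₁ ∈ Finset.range m, cI π i₁) := by
    rw [gR, show {π : ℕ × (Fin e → ℕ) → ℕ | IsPart π ∧ InBox' m N π ∧ sh1 π = Diag ρ}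
        = ↑hTfin.toFinset from hTfin.coe_toFinset.symm,
      finsum_mem_coe_finset, map_sum]
    refine Finset.sum_congr rfl fun π hπ => ?_
    have hπT : π ∈ T := hTfin.mem_toFinset.mp hπ
    exact LPPAux.eval_monom m N q π hπT.2.1
  -- compute the tsum as a finite sum and transport along Φ
  rw [tsum_fintype]
  have step1 : ∀ W : S,
      (∏ i₁ : Fin m, ∏ v : (∀ ℓ : Fin e, Fin (N ℓ)), ((1 - q) * q ^ (W.1 (↑i₁, fun ℓ => (v ℓ : ℕ)))))
      = (1 - q) ^ (m * ∏ ℓ, N ℓ) * q ^ (∑ i₁ ∈ Finset.range m, cI (LPPAux.PiW m N W.1) i₁) := by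
    intro W
    rw [hsummand W.1]
    congr 2
    have hsupp : ∀ p, LPPAux.PiW m N W.1 p ≠ 0 → LPPAux.InB m N p := LPPAux.PiW_supp m N W.1
    rw [LPPAux.sum_cI m N _ hsupp, LPPAux.WOf_PiW_full m N W.1 W.2.1]
  calc ∑ W : S, (∏ i₁ : Fin m, ∏ v : (∀ ℓ : Fin e, Fin (N ℓ)),
        ((1 - q) * q ^ (W.1 (↑i₁, fun ℓ => (v ℓ : ℕ)))))
      = ∑ W : S, (1 - q) ^ (m * ∏ ℓ, N ℓ) *
          q ^ (∑ i₁ ∈ Finset.range m, cI (LPPAux.PiW m N W.1) i₁) :=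
        Finset.sum_congr rfl fun W _ => step1 W
    _ = ∑ π : ↥T, (1 - q) ^ (m * ∏ ℓ, N ℓ) *
          q ^ (∑ i₁ ∈ Finset.range m, cI (π : (ℕ × (Fin e → ℕ)) → ℕ) i₁) :=
        Fintype.sum_equiv Φ _ _ (fun W => rfl)
    _ = (1 - q) ^ (m * ∏ ℓ, N ℓ) *
          ∑ π : ↥T, q ^ (∑ i₁ ∈ Finset.range m, cI (π : (ℕ × (Fin e → ℕ)) → ℕ) i₁) := by
        rw [Finset.mul_sum]
    _ = (1 - q) ^ (m * ∏ ℓ, N ℓ) * MvPolynomial.eval (fun _ : ℕ => q) (gR e m N ρ) := by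
        rw [hgR, Finset.sum_subtype (p := (· ∈ T)) hTfin.toFinset (fun x => hTfin.mem_toFinset)
          (fun π => q ^ (∑ i₁ ∈ Finset.range m, cI π i₁))]
end
end
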